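/- Correctness of the reduction from SAT to consistency checking: Let C_1,…,C_m be clauses over propositional variables x_1,…,x_n, where each clause is a set of literals and no variable occurs both positively and negatively in the same clause. Define an influence graph (V,E,σ): V consists of the n variable vertices x_1,…,x_n and the m clause vertices C_1,…,C_m; the input vertices are exactly x_1,…,x_n; E contains an edge (x_j, C_i) exactly when x_j occurs in C_i; and σ(x_j, C_i) = + if x_j occurs positively in C_i and σ(x_j, C_i) = − if x_j occurs negatively in C_i. Define the partial vertex labeling μ by μ(C_i) = + for all 1 ≤ i ≤ m and μ undefined on x_1,…,x_n. Then (V,E,σ) and μ are consistent if and only if the conjunction C_1 ∧ … ∧ C_m is satisfiable. -/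

import Mathlib

/-- Sign multiplication: `true` stands for `+` and `false` for `−`
(`+·+ = −·− = +`, `+·− = −·+ = −`). -/
def signMul (a b : Bool) : Bool := a == b

/-- `σ'` and `μ'` are witnessing labelings for `W` in the influence graph with
vertex type `V`, edges `E`, partial edge labeling `σ`, partial vertex labeling `μ`,
and input vertices `I`: they are total, extend `σ` and `μ`, and for every
non-input vertex `i ∈ W` there is an edge `(j, i) ∈ E` with
`μ' i = μ' j · σ' (j, i)`. -/
def Witnessing {V : Type} (E : Set (V × V)) (σ : V × V → Option Bool)
    (μ : V → Option Bool) (I : Set V) (W : Set V)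
    (σ' : V × V → Bool) (μ' : V → Bool) : Prop :=
  (∀ e s, σ e = some s → σ' e = s) ∧
  (∀ i s, μ i = some s → μ' i = s) ∧
  (∀ i ∈ W, i ∉ I → ∃ j, (j, i) ∈ E ∧ μ' i = signMul (μ' j) (σ' (j, i)))

/-- The influence graph `(V, E, σ)` with inputs `I` and the partial vertex
labeling `μ` are consistent: there are witnessing labelings for all of `V`. -/
def Consistent {V : Type} (E : Set (V × V)) (σ : V × V → Option Bool)
    (μ : V → Option Bool) (I : Set V) : Prop :=
  ∃ σ' μ', Witnessing E σ μ I Set.univ σ' μ'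

lemma signMul_eq_true {a b : Bool} : signMul a b = true ↔ a = b := beq_iff_eq

lemma Option.getD_eq_of_eq_some {α : Type*} {o : Option α} {s d : α} (h : o = some s) :
    o.getD d = s := by
  simp [h]

section Reduction

variable {n m : ℕ} (pol : Fin m → Fin n → Option Bool)

/-- `pol i j = some s` says that `x_j` occurs in `C_i` with polarity `s`. -/
def Satisfies (a : Fin n → Bool) : Prop :=
  ∀ i, ∃ j s, pol i j = some s ∧ a j = s

def clauseEdges : Set ((Fin n ⊕ Fin m) × (Fin n ⊕ Fin m)) :=
  {e | ∃ j i, pol i j ≠ none ∧ e = (Sum.inl j, Sum.inr i)}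

def variableVertices : Set (Fin n ⊕ Fin m) := {v | ∃ j, v = Sum.inl j}

variable {pol} {σ : (Fin n ⊕ Fin m) × (Fin n ⊕ Fin m) → Option Bool}
  {μ : Fin n ⊕ Fin m → Option Bool}

lemma mem_clauseEdges_inr {v : Fin n ⊕ Fin m} {i : Fin m}
    (h : (v, Sum.inr i) ∈ clauseEdges pol) : ∃ j, v = Sum.inl j ∧ pol i j ≠ none := by
  obtain ⟨j, i', hpol, hv⟩ := h
  obtain ⟨rfl, hi⟩ := Prod.mk.inj hv
  obtain rfl := Sum.inr_injective hi
  exact ⟨j, rfl, hpol⟩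

/-- The clause vertex `C_i` is labelled `+`, so its witnessing edge `(x_j, C_i)` forces
`μ' x_j = σ' (x_j, C_i) = pol i j`: the variable labels satisfy `C_i`. -/
lemma Witnessing.satisfies (hσ : ∀ i j, σ (Sum.inl j, Sum.inr i) = pol i j)
    (hμ : ∀ i, μ (Sum.inr i) = some true) {σ' : (Fin n ⊕ Fin m) × (Fin n ⊕ Fin m) → Bool}
    {μ' : Fin n ⊕ Fin m → Bool}
    (h : Witnessing (clauseEdges pol) σ μ variableVertices Set.univ σ' μ') :
    Satisfies pol (fun j => μ' (Sum.inl j)) := by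
  obtain ⟨hσ', hμ', hw⟩ := h
  intro i
  obtain ⟨v, hedge, hsign⟩ := hw (Sum.inr i) trivial (by rintro ⟨j, ⟨⟩⟩)
  obtain ⟨j, rfl, hpol⟩ := mem_clauseEdges_inr hedge
  obtain ⟨s, hs⟩ := Option.ne_none_iff_exists'.mp hpol
  have hclause : μ' (Sum.inr i) = true := hμ' _ _ (hμ i)
  have hedge_sign : σ' (Sum.inl j, Sum.inr i) = s := hσ' _ _ ((hσ i j).trans hs)
  rw [hclause, hedge_sign, eq_comm, signMul_eq_true] at hsign
  exact ⟨j, s, hs, hsign⟩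

/-- Edges keep their prescribed sign, and the variable vertices, being unlabelled inputs,
can carry the truth assignment. -/
lemma witnessing_of_satisfies (hσ : ∀ i j, σ (Sum.inl j, Sum.inr i) = pol i j)
    (hμ : ∀ i, μ (Sum.inr i) = some true) (hμ_var : ∀ j, μ (Sum.inl j) = none)
    {a : Fin n → Bool} (ha : Satisfies pol a) :
    Witnessing (clauseEdges pol) σ μ variableVertices Set.univ
      (fun e => (σ e).getD true) (Sum.elim a fun _ => true) := by
  refine ⟨fun e s hs => Option.getD_eq_of_eq_some hs, ?_, ?_⟩
  · rintro (j | i) s hs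
    · rw [hμ_var] at hs
      cases hs
    · rw [hμ] at hs
      exact Option.some_injective _ hs
  · rintro (j | i) - hin
    · exact absurd ⟨j, rfl⟩ hin
    · obtain ⟨j, s, hpol, has⟩ := ha i
      refine ⟨Sum.inl j, ⟨j, i, by simp [hpol], rfl⟩, ?_⟩
      change true = signMul (a j) ((σ (Sum.inl j, Sum.inr i)).getD true)
      rw [hσ, Option.getD_eq_of_eq_some hpol, eq_comm, signMul_eq_true, has]

theorem consistent_iff_satisfiable (hσ : ∀ i j, σ (Sum.inl j, Sum.inr i) = pol i j)
    (hμ : ∀ i, μ (Sum.inr i) = some true) (hμ_var : ∀ j, μ (Sum.inl j) = none) :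
    Consistent (clauseEdges pol) σ μ variableVertices ↔ ∃ a, Satisfies pol a :=
  ⟨fun ⟨_, _, h⟩ => ⟨_, h.satisfies hσ hμ⟩,
    fun ⟨_, ha⟩ => ⟨_, _, witnessing_of_satisfies hσ hμ hμ_var ha⟩⟩

end Reduction

theorem sat_reduction (n m : ℕ) (pol : Fin m → Fin n → Option Bool) :
    Consistent (V := Fin n ⊕ Fin m)
      {e | ∃ j i, pol i j ≠ none ∧ e = (Sum.inl j, Sum.inr i)}
      (fun e =>
        match e with
        | (Sum.inl j, Sum.inr i) => pol i j
        | _ => none)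
      (fun v =>
        match v with
        | Sum.inr _ => some true
        | Sum.inl _ => none)
      {v | ∃ j, v = Sum.inl j} ↔
    ∃ a : Fin n → Bool, ∀ i, ∃ j s, pol i j = some s ∧ a j = s :=
  consistent_iff_satisfiable (fun _ _ => rfl) (fun _ => rfl) (fun _ => rfl)
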